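/- arXiv:1311.7685 — 7 statements merged into one kernel-verified Lean document; each statement's English description precedes it below -/
import Mathlib

section
/- For any nonempty finite set S of binary strings of length N, there exist a string s ∈ {0,1}^N and a permutation σ of {1,…,N} such that for every p ∈ {1,…,N}, the set S_p = {y ∈ S : y_{σ(i)} = s_{σ(i)} for all 1 ≤ i ≤ p−1, and y_{σ(p)} ≠ s_{σ(p)}} satisfies |S_p| ≤ |S| / max{2, p}. -/
/-!
Branch greedily: pick a coordinate whose minority is largest, let `s` take the majority bit there,
and recurse on the majority. Minority counts can only shrink on passing to a subset, so the branch
sizes `|S_p|` are nonincreasing, and `|S_1| ≤ |S| / 2` since `S_1` is a minority. As the `S_p` are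
disjoint subsets of `S`, also `p |S_p| ≤ |S_1| + ⋯ + |S_p| ≤ |S|`.
-/

open Finset

section FirstDiff

variable {ι κ β : Type*} [DecidableEq β] {n : ℕ}

/-- The paper's `S_{p+1}`: positions are indexed from `0`. -/
def firstDiffSet (S : Finset (ι → β)) (s : ι → β) (σ : Fin n → ι) (p : Fin n) :
    Finset (ι → β) :=
  S.filter fun y => (∀ i : Fin n, i < p → y (σ i) = s (σ i)) ∧ y (σ p) ≠ s (σ p)

lemma disjoint_firstDiffSet (S : Finset (ι → β)) (s : ι → β) (σ : Fin n → ι) {p q : Fin n}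
    (hpq : p ≠ q) : Disjoint (firstDiffSet S s σ p) (firstDiffSet S s σ q) := by
  rcases hpq.lt_or_gt with h | h
  · exact disjoint_filter.2 fun y _ hp hq => hp.2 (hq.1 p h)
  · exact disjoint_filter.2 fun y _ hp hq => hq.2 (hp.1 q h)

lemma sum_card_firstDiffSet_le (S : Finset (ι → β)) (s : ι → β) (σ : Fin n → ι) :
    ∑ p, #(firstDiffSet S s σ p) ≤ #S := by
  classical
  rw [← card_biUnion fun p _ q _ hpq => disjoint_firstDiffSet S s σ hpq]
  exact card_le_card (biUnion_subset.2 fun p _ => filter_subset _ _)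

lemma firstDiffSet_zero (S : Finset (ι → β)) (s : ι → β) (σ : Fin (n + 1) → ι) :
    firstDiffSet S s σ 0 = S.filter fun y => y (σ 0) ≠ s (σ 0) := by
  simp [firstDiffSet]

lemma firstDiffSet_cons_succ (S : Finset (ι → β)) (s : ι → β) (i : ι) (τ : Fin n → ι)
    (q : Fin n) :
    firstDiffSet S s (Fin.cons i τ) q.succ
      = firstDiffSet (S.filter fun y => y i = s i) s τ q := by
  ext y
  simp only [firstDiffSet, mem_filter, Fin.forall_fin_succ, Fin.cons_zero, Fin.cons_succ,
    Fin.succ_pos, Fin.succ_lt_succ_iff, forall_const]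
  tauto

lemma card_firstDiffSet_image_comp [DecidableEq (κ → β)] {S : Finset (ι → β)} {g : κ → ι}
    (hg : Set.InjOn (· ∘ g) (S : Set (ι → β))) (s : ι → β) (τ : Fin n → κ) (q : Fin n) :
    #(firstDiffSet (S.image (· ∘ g)) (s ∘ g) τ q) = #(firstDiffSet S s (g ∘ τ) q) := by
  rw [firstDiffSet, filter_image, card_image_of_injOn (hg.mono (filter_subset _ _))]
  rfl

end FirstDiff

lemma succ_nsmul_le_sum_of_antitone {M : Type*} [AddCommMonoid M] [PartialOrder M]
    [CanonicallyOrderedAdd M] [AddLeftMono M] {n : ℕ} {f : Fin n → M} (hf : Antitone f)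
    (p : Fin n) : ((p : ℕ) + 1) • f p ≤ ∑ q, f q := by
  rw [← Fin.card_Iic]
  exact (card_nsmul_le_sum _ f _ fun q hq => hf (mem_Iic.1 hq)).trans
    (sum_le_sum_of_subset (subset_univ _))

section Minority

variable {ι κ : Type*}

def minorityCount (S : Finset (ι → Bool)) (i : ι) : ℕ :=
  min #(S.filter fun y => y i ≠ true) #(S.filter fun y => y i ≠ false)

lemma two_mul_minorityCount_le_card (S : Finset (ι → Bool)) (i : ι) :
    2 * minorityCount S i ≤ #S := by
  have hsplit : #(S.filter fun y => y i = true) + #(S.filter fun y => y i ≠ true) = #S :=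
    card_filter_add_card_filter_not _
  have htrue : S.filter (fun y => y i ≠ false) = S.filter fun y => y i = true :=
    filter_congr fun y _ => by simp
  rw [minorityCount, htrue]
  omega

lemma exists_card_filter_ne_eq_minorityCount (S : Finset (ι → Bool)) (i : ι) :
    ∃ b : Bool, #(S.filter fun y => y i ≠ b) = minorityCount S i := by
  rcases le_total #(S.filter fun y => y i ≠ true) #(S.filter fun y => y i ≠ false) with h | h
  · exact ⟨true, (min_eq_left h).symm⟩
  · exact ⟨false, (min_eq_right h).symm⟩

lemma minorityCount_mono {S T : Finset (ι → Bool)} (h : T ⊆ S) (i : ι) :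
    minorityCount T i ≤ minorityCount S i :=
  min_le_min (card_le_card (filter_subset_filter _ h)) (card_le_card (filter_subset_filter _ h))

lemma minorityCount_image_comp [DecidableEq (κ → Bool)] {S : Finset (ι → Bool)} {g : κ → ι}
    (hg : Set.InjOn (· ∘ g) (S : Set (ι → Bool))) (j : κ) :
    minorityCount (S.image (· ∘ g)) j = minorityCount S (g j) := by
  simp only [minorityCount, filter_image, card_image_of_injOn (hg.mono (filter_subset _ _))]
  rfl

end Minority

lemma Fin.injOn_comp_succAbove {β : Type*} {n : ℕ} (i : Fin (n + 1)) (b : β) :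
    Set.InjOn (· ∘ i.succAbove) {y : Fin (n + 1) → β | y i = b} := by
  intro y hy z hz h
  funext k
  exact Fin.succAboveCases i (hy.trans hz.symm) (congrFun h) k

lemma exists_perm_coe_eq_cons {n : ℕ} (i : Fin (n + 1)) (τ : Equiv.Perm (Fin n)) :
    ∃ σ : Equiv.Perm (Fin (n + 1)), ⇑σ = Fin.cons i (i.succAbove ∘ τ) := by
  have hinj : Function.Injective (Fin.cons i (i.succAbove ∘ τ) : Fin (n + 1) → Fin (n + 1)) :=
    Fin.cons_injective_iff.2
      ⟨fun ⟨j, hj⟩ => Fin.succAbove_ne i (τ j) hj, Fin.succAbove_right_injective.comp τ.injective⟩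
  exact ⟨Equiv.ofBijective _ (Finite.injective_iff_bijective.1 hinj), rfl⟩

theorem exists_antitone_card_firstDiffSet (N : ℕ) (S : Finset (Fin N → Bool)) :
    ∃ (s : Fin N → Bool) (σ : Equiv.Perm (Fin N)),
      Antitone (fun p => #(firstDiffSet S s σ p)) ∧
      ∀ p, ∃ j, #(firstDiffSet S s σ p) ≤ minorityCount S j := by
  induction N with
  | zero => exact ⟨Fin.elim0, 1, fun p => p.elim0, fun p => p.elim0⟩
  | succ N ih =>
    obtain ⟨i, -, hi⟩ := exists_max_image univ (minorityCount S) univ_nonempty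
    obtain ⟨b, hb⟩ := exists_card_filter_ne_eq_minorityCount S i
    set T := S.filter fun y => y i = b
    have hinj : Set.InjOn (· ∘ i.succAbove) (T : Set (Fin (N + 1) → Bool)) :=
      (Fin.injOn_comp_succAbove i b).mono fun y hy => (mem_filter.1 hy).2
    obtain ⟨s', τ, hanti, hbound⟩ := ih (T.image (· ∘ i.succAbove))
    set s : Fin (N + 1) → Bool := Fin.insertNth i b s'
    have hsi : s i = b := Fin.insertNth_apply_same (α := fun _ => Bool) i b s'
    have hs' : s ∘ i.succAbove = s' :=
      funext fun j => Fin.insertNth_apply_succAbove (α := fun _ => Bool) i b s' j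
    rw [← hs'] at hanti hbound
    obtain ⟨σ, hσ⟩ := exists_perm_coe_eq_cons i τ
    have hzero : #(firstDiffSet S s σ 0) = minorityCount S i := by
      rw [firstDiffSet_zero, hσ, Fin.cons_zero, hsi, hb]
    have hsucc : ∀ q, #(firstDiffSet S s σ q.succ)
        = #(firstDiffSet (T.image (· ∘ i.succAbove)) (s ∘ i.succAbove) τ q) := fun q => by
      rw [hσ, firstDiffSet_cons_succ, hsi, card_firstDiffSet_image_comp hinj]
    have hle_zero : ∀ q, #(firstDiffSet S s σ q) ≤ #(firstDiffSet S s σ 0) := fun q => by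
      induction q using Fin.cases with
      | zero => rfl
      | succ q =>
        obtain ⟨j, hj⟩ := hbound q
        rw [hsucc, hzero]
        rw [minorityCount_image_comp hinj] at hj
        exact hj.trans ((minorityCount_mono (filter_subset _ _) _).trans (hi _ (mem_univ _)))
    refine ⟨s, σ, fun p q hpq => ?_, fun p => ⟨i, hzero ▸ hle_zero p⟩⟩
    induction q using Fin.cases with
    | zero => rw [Fin.le_zero_iff.1 hpq]
    | succ q =>
      induction p using Fin.cases with
      | zero => exact hle_zero _
      | succ p => simpa only [hsucc] using hanti (Fin.succ_le_succ_iff.1 hpq)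

theorem ordering_lemma_general (N : ℕ) (S : Finset (Fin N → Bool)) :
    ∃ (s : Fin N → Bool) (σ : Equiv.Perm (Fin N)),
      ∀ p : Fin N,
        ((S.filter (fun y =>
            (∀ i : Fin N, i < p → y (σ i) = s (σ i)) ∧ y (σ p) ≠ s (σ p))).card : ℝ)
          ≤ (S.card : ℝ) / max 2 ((p : ℕ) + 1) := by
  obtain ⟨s, σ, hanti, hbound⟩ := exists_antitone_card_firstDiffSet N S
  refine ⟨s, σ, fun p => ?_⟩
  obtain ⟨j, hj⟩ := hbound p
  have htwo : 2 * #(firstDiffSet S s σ p) ≤ #S :=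
    (Nat.mul_le_mul_left 2 hj).trans (two_mul_minorityCount_le_card S j)
  have hsucc : ((p : ℕ) + 1) * #(firstDiffSet S s σ p) ≤ #S :=
    (succ_nsmul_le_sum_of_antitone hanti p).trans (sum_card_firstDiffSet_le S s σ)
  have hmax : #(firstDiffSet S s σ p) * max 2 ((p : ℕ) + 1) ≤ #S := by
    rw [mul_max_of_nonneg _ _ (Nat.zero_le _)]
    exact max_le (by linarith) (by linarith)
  rw [le_div_iff₀ (by positivity)]
  exact_mod_cast hmax

theorem ordering_lemma (N : ℕ) (S : Finset (Fin N → Bool)) (hS : S.Nonempty) :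
    ∃ (s : Fin N → Bool) (σ : Equiv.Perm (Fin N)),
      ∀ p : Fin N,
        ((S.filter (fun y =>
            (∀ i : Fin N, i < p → y (σ i) = s (σ i)) ∧ y (σ p) ≠ s (σ p))).card : ℝ)
          ≤ (S.card : ℝ) / max 2 ((p : ℕ) + 1) :=
  ordering_lemma_general N S
end

section
/- There exists a constant C > 0 such that the following holds: for all integers N ≥ 2 and M with 2 ≤ M ≤ 2^N, every integer r ∈ {1,…,N}, and all integers p_1, …, p_r ∈ {1,…,N} satisfying ∑_{i=1}^r p_i ≤ N and ∏_{i=1}^r max{2, p_i} ≤ M, one has ∑_{i=1}^r √(p_i) ≤ C · √( N · log₂ M / ( log₂(N / log₂ M) + 1 ) ). -/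
open Finset Real

/-!
Write `L = log₂ M`, `y = N / L`, `D = log₂ y + 1` and `X = √(N L / D)`. Since every factor
`max 2 pᵢ` is at least `2`, the hypotheses give `∑ pᵢ ≤ N` and `∑ log₂ (max 2 pᵢ) ≤ L`.
If `y ≤ 8`, Cauchy–Schwarz and `r ≤ L` give `∑ √pᵢ ≤ √(r N) ≤ √(N L) ≤ 2 X`.
Otherwise put `t = y D`: a part `pᵢ ≥ t` has `√pᵢ ≤ pᵢ / √t`, and a part `pᵢ < t` has
`√pᵢ ≤ (√t / log₂ t) log₂ pᵢ` because `√x / log x` increases beyond `e²` (up to an additive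
`3 log₂ (max 2 pᵢ)` for the parts below `9`). Summing, `∑ √pᵢ ≤ N / √t + (2 √t / D + 3) L`,
and `t` is chosen so that `N / √t = √t L / D = X`, while `L ≤ X` because `D ≤ y`.
-/

lemma logb_two_add_one_le {y : ℝ} (hy : 2 ≤ y) : logb 2 y + 1 ≤ y := by
  have bernoulli := one_add_mul_self_le_rpow_one_add (s := 1) (by norm_num) (p := y - 1)
    (by linarith)
  norm_num at bernoulli
  have := (logb_le_iff_le_rpow one_lt_two (by linarith)).2 bernoulli
  linarith

lemma exp_two_le_nine : exp 2 ≤ 9 := by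
  have h : exp 2 = exp 1 * exp 1 := by rw [← exp_add]; norm_num
  nlinarith [exp_one_lt_d9, exp_pos 1]

lemma sqrt_le_div_sqrt_add_mul_logb {t x : ℝ} (ht : 9 ≤ t) (hx : 0 ≤ x) :
    √x ≤ x / √t + (√t / logb 2 t + 3) * logb 2 (max 2 x) := by
  have hlogt : 0 < logb 2 t := logb_pos one_lt_two (by linarith)
  have hlogx : 1 ≤ logb 2 (max 2 x) :=
    (le_logb_iff_rpow_le one_lt_two (by positivity)).2 (by simp)
  have hfirst : 0 ≤ x / √t := by positivity
  have hsecond : 0 ≤ √t / logb 2 t * logb 2 (max 2 x) := by positivity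
  rcases le_total t x with htx | hxt
  · have : √x ≤ x / √t := by
      rw [le_div_iff₀ (by positivity)]
      calc √x * √t ≤ √x * √x := by gcongr
        _ = x := mul_self_sqrt hx
    linarith
  rcases le_total x 9 with hx9 | h9x
  · have : √x ≤ 3 := (sqrt_le_left (by norm_num)).2 (by linarith)
    linarith
  · have hx2 : max 2 x = x := max_eq_right (by linarith)
    have hmono : log t / √t ≤ log x / √x :=
      log_div_sqrt_antitoneOn (exp_two_le_nine.trans h9x)
        (exp_two_le_nine.trans (h9x.trans hxt)) hxt
    have : √x ≤ √t / logb 2 t * logb 2 x := by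
      have hlt : 0 < log t := log_pos (by linarith)
      rw [div_le_div_iff₀ (by positivity) (by positivity)] at hmono
      have hratio : √t / logb 2 t * logb 2 x = √t * log x / log t := by
        rw [logb, logb]
        field_simp
      rw [hratio, le_div_iff₀ hlt]
      linarith
    rw [hx2] at hsecond hlogx ⊢
    linarith

section

variable {ι : Type*} (s : Finset ι) {p : ι → ℝ} {N L : ℝ}

lemma sum_sqrt_le_sqrt_mul (hp : ∀ i, 0 ≤ p i) (hsum : ∑ i ∈ s, p i ≤ N)
    (hlog : ∑ i ∈ s, logb 2 (max 2 (p i)) ≤ L) : ∑ i ∈ s, √(p i) ≤ √(N * L) := by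
  have hcard : (#s : ℝ) ≤ L := by
    refine le_trans ?_ hlog
    simpa using card_nsmul_le_sum s (fun i ↦ logb 2 (max 2 (p i))) 1 fun i _ ↦
      (le_logb_iff_rpow_le one_lt_two (by positivity)).2 (by simp)
  calc ∑ i ∈ s, √(p i) = ∑ i ∈ s, √1 * √(p i) := by simp
    _ ≤ √(∑ i ∈ s, 1) * √(∑ i ∈ s, p i) := sum_sqrt_mul_sqrt_le s (fun _ ↦ zero_le_one) hp
    _ ≤ √L * √N := by gcongr; simpa using hcard
    _ = √(N * L) := by
      rw [mul_comm, sqrt_mul (by linarith [sum_nonneg fun i (_ : i ∈ s) ↦ hp i])]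

lemma sum_sqrt_le_of_eight_le (hp : ∀ i, 0 ≤ p i) (hL : 0 < L) (hNL : 8 ≤ N / L)
    (hsum : ∑ i ∈ s, p i ≤ N) (hlog : ∑ i ∈ s, logb 2 (max 2 (p i)) ≤ L) :
    ∑ i ∈ s, √(p i) ≤ 6 * √(N * L / (logb 2 (N / L) + 1)) := by
  set y := N / L with hy
  set D := logb 2 y + 1 with hD
  have hN : N = L * y := by rw [hy]; field_simp
  have hD4 : 4 ≤ D := by
    have : 3 ≤ logb 2 y :=
      (le_logb_iff_rpow_le one_lt_two (by linarith)).2 (by norm_num; linarith)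
    linarith
  set t := y * D with ht
  have ht9 : 9 ≤ t := by nlinarith
  have hD0 : 0 < D := by linarith
  have ht0 : 0 < t := by linarith
  have hN0 : 0 < N := by rw [hN]; positivity
  have hlogt : D / 2 ≤ logb 2 t := by
    have : logb 2 y ≤ logb 2 t := logb_le_logb_of_le one_lt_two (by linarith) (by nlinarith)
    linarith
  have hpointwise : ∑ i ∈ s, √(p i) ≤ N / √t + (2 * √t / D + 3) * L := by
    calc ∑ i ∈ s, √(p i)
        ≤ ∑ i ∈ s, (p i / √t + (√t / logb 2 t + 3) * logb 2 (max 2 (p i))) :=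
          sum_le_sum fun i _ ↦ sqrt_le_div_sqrt_add_mul_logb ht9 (hp i)
      _ = (∑ i ∈ s, p i) / √t + (√t / logb 2 t + 3) * ∑ i ∈ s, logb 2 (max 2 (p i)) := by
          rw [sum_add_distrib, sum_div, mul_sum]
      _ ≤ N / √t + (2 * √t / D + 3) * L := by
          have hcoeff : √t / logb 2 t ≤ 2 * √t / D := by
            rw [div_le_div_iff₀ (by linarith) (by linarith)]
            nlinarith [sqrt_nonneg t]
          have hlog0 : 0 ≤ ∑ i ∈ s, logb 2 (max 2 (p i)) := sum_nonneg fun i _ ↦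
            logb_nonneg one_lt_two (by simp)
          gcongr
  have hX₁ : N / √t = √(N * L / D) := by
    rw [eq_comm, sqrt_eq_iff_eq_sq (by positivity) (by positivity), div_pow, sq_sqrt ht0.le,
      hN, ht]
    field_simp
  have hX₂ : √t * L / D = √(N * L / D) := by
    rw [eq_comm, sqrt_eq_iff_eq_sq (by positivity) (by positivity), div_pow, mul_pow,
      sq_sqrt ht0.le, hN, ht]
    field_simp
  have hX₃ : L ≤ √(N * L / D) := by
    have : D ≤ y := by linarith [logb_two_add_one_le (by linarith : (2 : ℝ) ≤ y)]
    rw [le_sqrt hL.le (by positivity), hN, le_div_iff₀ hD0]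
    nlinarith
  calc ∑ i ∈ s, √(p i) ≤ N / √t + 2 * (√t * L / D) + 3 * L :=
        hpointwise.trans_eq (by ring)
    _ ≤ 6 * √(N * L / D) := by rw [hX₁, hX₂]; linarith

lemma sum_sqrt_le (hp : ∀ i, 0 ≤ p i) (hL : 0 < L) (hLN : L ≤ N)
    (hsum : ∑ i ∈ s, p i ≤ N) (hlog : ∑ i ∈ s, logb 2 (max 2 (p i)) ≤ L) :
    ∑ i ∈ s, √(p i) ≤ 6 * √(N * L / (logb 2 (N / L) + 1)) := by
  rcases le_total 8 (N / L) with h8 | h8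
  · exact sum_sqrt_le_of_eight_le s hp hL h8 hsum hlog
  have hD : 0 < logb 2 (N / L) + 1 := by
    have : 0 ≤ logb 2 (N / L) := logb_nonneg one_lt_two ((one_le_div hL).2 hLN)
    linarith
  have hD4 : logb 2 (N / L) + 1 ≤ 4 := by
    have : logb 2 (N / L) ≤ 3 :=
      (logb_le_iff_le_rpow one_lt_two (div_pos (hL.trans_le hLN) hL)).2 (by norm_num; linarith)
    linarith
  calc ∑ i ∈ s, √(p i) ≤ √(N * L) := sum_sqrt_le_sqrt_mul s hp hsum hlog
    _ ≤ √(36 * (N * L / (logb 2 (N / L) + 1))) := by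
        apply sqrt_le_sqrt
        rw [mul_div_assoc', le_div_iff₀ hD]
        nlinarith [mul_pos (hL.trans_le hLN) hL]
    _ = 6 * √(N * L / (logb 2 (N / L) + 1)) := by
        rw [sqrt_mul (by norm_num), show (36 : ℝ) = 6 ^ 2 by norm_num, sqrt_sq (by norm_num)]

end

theorem cost_bound_NM :
    ∃ C : ℝ, C > 0 ∧
      ∀ (N M : ℕ), 2 ≤ N → 2 ≤ M → (M : ℝ) ≤ 2 ^ N →
      ∀ (r : ℕ), 1 ≤ r → r ≤ N →
      ∀ (p : Fin r → ℕ),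
        (∀ i, 1 ≤ p i) → (∀ i, p i ≤ N) →
        (∑ i, p i ≤ N) →
        (∏ i, max 2 (p i) ≤ M) →
        ∑ i, Real.sqrt (p i)
          ≤ C * Real.sqrt ((N : ℝ) * Real.logb 2 M /
              (Real.logb 2 ((N : ℝ) / Real.logb 2 M) + 1)) := by
  refine ⟨6, by norm_num, fun N M _ hM hMN r _ _ p _ _ hsum hprod ↦ ?_⟩
  have hL : 0 < logb 2 M := logb_pos one_lt_two (by exact_mod_cast hM)
  have hLN : logb 2 M ≤ N := by
    have := logb_le_logb_of_le one_lt_two (by positivity) hMN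
    rwa [logb_pow, logb_self_eq_one one_lt_two, mul_one] at this
  have hlog : ∑ i, logb 2 (max 2 (p i : ℝ)) ≤ logb 2 M := by
    rw [← logb_prod _ _ fun i _ ↦ by positivity]
    exact logb_le_logb_of_le one_lt_two (by positivity) (by exact_mod_cast hprod)
  exact sum_sqrt_le univ (fun i ↦ (p i).cast_nonneg) hL hLN (by exact_mod_cast hsum) hlog
end

section
/- Let n' ≥ 1 be an integer and let N', m' be reals with 2 ≤ m' ≤ N'. If x_1, …, x_{n'} are nonnegative reals satisfying ∑_{k=1}^{n'} 2^k x_k ≤ N' and ∑_{k=1}^{n'} k x_k ≤ m', then ∑_{k=1}^{n'} 2^{k/2} x_k ≤ 2√2 · √( N' · m' / log₂(2 N' / m') ). -/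
open Finset Real

lemma pow_div_mono_aux (k K : ℕ) (hk : 1 ≤ k) (hkK : k ≤ K) :
    2 ^ k * K ≤ 2 ^ K * k := by
  induction K, hkK using Nat.le_induction with
  | base => exact le_rfl
  | succ K hK ih =>
    have h1 : 2 ^ k ≤ 2 ^ K * k :=
      le_trans (Nat.pow_le_pow_right (by norm_num) hK) (Nat.le_mul_of_pos_right _ hk)
    calc 2 ^ k * (K + 1) = 2 ^ k * K + 2 ^ k := by ring
    _ ≤ 2 ^ K * k + 2 ^ K * k := Nat.add_le_add ih h1
    _ = 2 ^ (K + 1) * k := by ring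

theorem lp_value_bound (n' : ℕ) (hn : 1 ≤ n') (N' m' : ℝ) (hm : 2 ≤ m') (hmN : m' ≤ N')
    (x : ℕ → ℝ) (hx : ∀ k ∈ Finset.Icc 1 n', 0 ≤ x k)
    (h1 : ∑ k ∈ Finset.Icc 1 n', (2 : ℝ) ^ k * x k ≤ N')
    (h2 : ∑ k ∈ Finset.Icc 1 n', (k : ℝ) * x k ≤ m') :
    ∑ k ∈ Finset.Icc 1 n', (2 : ℝ) ^ ((k : ℝ) / 2) * x k
      ≤ 2 * Real.sqrt 2 * Real.sqrt (N' * m' / Real.logb 2 (2 * N' / m')) := by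
  have hm0 : (0:ℝ) < m' := by linarith
  have hN0 : (0:ℝ) < N' := by linarith
  set L := Real.logb 2 (2 * N' / m') with hLdef
  have hq2 : (2:ℝ) ≤ 2 * N' / m' := by
    rw [le_div_iff₀ hm0]; linarith
  have hq0 : (0:ℝ) < 2 * N' / m' := by positivity
  have hL1 : (1:ℝ) ≤ L := by
    calc (1:ℝ) = Real.logb 2 2 := (Real.logb_self_eq_one (by norm_num)).symm
    _ ≤ L := Real.logb_le_logb_of_le (by norm_num) (by norm_num) hq2
  have hL0 : (0:ℝ) < L := by linarith
  have h2L : (2:ℝ) ^ L = 2 * N' / m' := Real.rpow_logb (by norm_num) (by norm_num) hq0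
  set K : ℕ := ⌈L⌉₊ with hKdef
  have hKL : L ≤ (K:ℝ) := Nat.le_ceil L
  have hK0 : 0 < (K:ℝ) := lt_of_lt_of_le hL0 hKL
  have hK1 : 1 ≤ K := by
    have := Nat.ceil_pos.mpr hL0
    omega
  have hKc : (K:ℝ) ≤ L + 1 := le_of_lt (Nat.ceil_lt_add_one (le_of_lt hL0))
  have hpowK : (2:ℝ) ^ K ≤ 4 * N' / m' := by
    have h := Real.rpow_le_rpow_of_exponent_le (by norm_num : (1:ℝ) ≤ 2) hKc
    rw [Real.rpow_natCast] at h
    calc (2:ℝ) ^ K ≤ (2:ℝ) ^ (L + 1) := h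
    _ = (2:ℝ) ^ L * 2 := by
        rw [Real.rpow_add (by norm_num), Real.rpow_one]
    _ = 4 * N' / m' := by rw [h2L]; ring
  -- pointwise bound
  have key : ∀ k ∈ Finset.Icc 1 n',
      (2:ℝ) ^ k * x k / k ≤ (2:ℝ) ^ K / K * ((k : ℝ) * x k) + 1 / K * ((2:ℝ) ^ k * x k) := by
    intro k hk
    have hk1 : 1 ≤ k := (Finset.mem_Icc.mp hk).1
    have hxk : 0 ≤ x k := hx k hk
    have hk0 : (0:ℝ) < (k:ℝ) := by exact_mod_cast hk1
    by_cases hcase : k ≤ K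
    · have hmono := pow_div_mono_aux k K hk1 hcase
      have hmonoR : (2:ℝ) ^ k * K ≤ (2:ℝ) ^ K * k := by exact_mod_cast hmono
      have hb : (2:ℝ) ^ k / k ≤ (2:ℝ) ^ K / K := by
        rw [div_le_div_iff₀ hk0 hK0]; linarith
      have h1k : (1:ℝ) ≤ (k:ℝ) := by exact_mod_cast hk1
      have : (2:ℝ) ^ k * x k / k ≤ (2:ℝ) ^ K / K * ((k : ℝ) * x k) := by
        have step1 : (2:ℝ) ^ k * x k / k = ((2:ℝ) ^ k / k) * x k := by ring
        rw [step1]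
        calc ((2:ℝ) ^ k / k) * x k ≤ ((2:ℝ) ^ K / K) * x k :=
              mul_le_mul_of_nonneg_right hb hxk
        _ ≤ (2:ℝ) ^ K / K * ((k : ℝ) * x k) := by
              apply mul_le_mul_of_nonneg_left _ (by positivity)
              nlinarith
      have hpos : 0 ≤ 1 / (K:ℝ) * ((2:ℝ) ^ k * x k) := by positivity
      linarith
    · push_neg at hcase
      have hKk : (K:ℝ) ≤ (k:ℝ) := by exact_mod_cast le_of_lt hcase
      have : (2:ℝ) ^ k * x k / k ≤ 1 / K * ((2:ℝ) ^ k * x k) := by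
        rw [one_div, inv_mul_eq_div]
        exact div_le_div_of_nonneg_left (by positivity) hK0 hKk
      have hpos : 0 ≤ (2:ℝ) ^ K / K * ((k : ℝ) * x k) := by positivity
      linarith
  -- sum bound on S2
  have hS2 : ∑ k ∈ Finset.Icc 1 n', (2:ℝ) ^ k * x k / k ≤ 8 * N' / L := by
    have hsum : ∑ k ∈ Finset.Icc 1 n', (2:ℝ) ^ k * x k / k
        ≤ ∑ k ∈ Finset.Icc 1 n',
            ((2:ℝ) ^ K / K * ((k : ℝ) * x k) + 1 / K * ((2:ℝ) ^ k * x k)) :=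
      Finset.sum_le_sum key
    rw [Finset.sum_add_distrib, ← Finset.mul_sum, ← Finset.mul_sum] at hsum
    have hA : (2:ℝ) ^ K / K * (∑ k ∈ Finset.Icc 1 n', (k : ℝ) * x k) ≤ (2:ℝ) ^ K / K * m' :=
      mul_le_mul_of_nonneg_left h2 (by positivity)
    have hB : 1 / (K:ℝ) * (∑ k ∈ Finset.Icc 1 n', (2:ℝ) ^ k * x k) ≤ 1 / K * N' :=
      mul_le_mul_of_nonneg_left h1 (by positivity)
    have hAm : (2:ℝ) ^ K / K * m' ≤ 4 * N' / K := by
      rw [div_mul_eq_mul_div, div_le_div_iff₀ hK0 hK0]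
      have : (2:ℝ) ^ K * m' ≤ (4 * N' / m') * m' :=
        mul_le_mul_of_nonneg_right hpowK (le_of_lt hm0)
      rw [div_mul_cancel₀] at this
      · nlinarith
      · exact ne_of_gt hm0
    have hfin : (5:ℝ) * N' / K ≤ 8 * N' / L := by
      rw [div_le_div_iff₀ hK0 hL0]
      nlinarith
    have h1K : (1:ℝ) / K * N' = N' / K := by ring
    calc ∑ k ∈ Finset.Icc 1 n', (2:ℝ) ^ k * x k / k
        ≤ (2:ℝ) ^ K / K * m' + 1 / K * N' := by linarith
    _ ≤ 4 * N' / K + N' / K := by rw [h1K] at *; linarith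
    _ = 5 * N' / K := by ring
    _ ≤ 8 * N' / L := hfin
  -- Cauchy-Schwarz
  set T := ∑ k ∈ Finset.Icc 1 n', (2 : ℝ) ^ ((k : ℝ) / 2) * x k with hTdef
  have hT0 : 0 ≤ T := by
    apply Finset.sum_nonneg
    intro k hk
    have := hx k hk
    positivity
  have csq := Finset.sum_mul_sq_le_sq_mul_sq (Finset.Icc 1 n')
      (fun k => Real.sqrt ((k : ℝ) * x k)) (fun k => Real.sqrt ((2:ℝ) ^ k * x k / k))
  have hprod : ∑ k ∈ Finset.Icc 1 n',
      Real.sqrt ((k : ℝ) * x k) * Real.sqrt ((2:ℝ) ^ k * x k / k) = T := by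
    apply Finset.sum_congr rfl
    intro k hk
    have hk1 : 1 ≤ k := (Finset.mem_Icc.mp hk).1
    have hxk : 0 ≤ x k := hx k hk
    have hk0 : (0:ℝ) < (k:ℝ) := by exact_mod_cast hk1
    rw [← Real.sqrt_mul (by positivity)]
    have harg : (k : ℝ) * x k * ((2:ℝ) ^ k * x k / k) = (2:ℝ) ^ k * (x k) ^ 2 := by
      field_simp
    rw [harg, Real.sqrt_mul (by positivity), Real.sqrt_sq hxk]
    congr 1
    rw [show ((2:ℝ) ^ k) = (2:ℝ) ^ (k:ℝ) from (Real.rpow_natCast 2 k).symm,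
      Real.sqrt_eq_rpow, ← Real.rpow_mul (by norm_num), mul_one_div]
  have hsq1 : ∑ k ∈ Finset.Icc 1 n', (Real.sqrt ((k : ℝ) * x k)) ^ 2
      = ∑ k ∈ Finset.Icc 1 n', (k : ℝ) * x k := by
    apply Finset.sum_congr rfl
    intro k hk
    have hxk := hx k hk
    exact Real.sq_sqrt (by positivity)
  have hsq2 : ∑ k ∈ Finset.Icc 1 n', (Real.sqrt ((2:ℝ) ^ k * x k / k)) ^ 2
      = ∑ k ∈ Finset.Icc 1 n', (2:ℝ) ^ k * x k / k := by
    apply Finset.sum_congr rfl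
    intro k hk
    have hxk := hx k hk
    have hk1 : 1 ≤ k := (Finset.mem_Icc.mp hk).1
    have hk0 : (0:ℝ) < (k:ℝ) := by exact_mod_cast hk1
    exact Real.sq_sqrt (by positivity)
  rw [hprod, hsq1, hsq2] at csq
  -- combine
  have hS2pos : 0 ≤ ∑ k ∈ Finset.Icc 1 n', (2:ℝ) ^ k * x k / k := by
    apply Finset.sum_nonneg
    intro k hk
    have hxk := hx k hk
    positivity
  have hT2 : T ^ 2 ≤ 8 * (N' * m' / L) := by
    calc T ^ 2 ≤ (∑ k ∈ Finset.Icc 1 n', (k : ℝ) * x k)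
          * (∑ k ∈ Finset.Icc 1 n', (2:ℝ) ^ k * x k / k) := csq
    _ ≤ m' * (8 * N' / L) := by
        apply mul_le_mul h2 hS2 hS2pos (by linarith)
    _ = 8 * (N' * m' / L) := by ring
  have hfinal : T ≤ Real.sqrt (8 * (N' * m' / L)) := by
    have := Real.sqrt_le_sqrt hT2
    rwa [Real.sqrt_sq hT0] at this
  have hsqrt8 : Real.sqrt 8 = 2 * Real.sqrt 2 := by
    rw [show (8:ℝ) = 2 ^ 2 * 2 by norm_num, Real.sqrt_mul (by positivity),
      Real.sqrt_sq (by norm_num)]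
  calc T ≤ Real.sqrt (8 * (N' * m' / L)) := hfinal
  _ = Real.sqrt 8 * Real.sqrt (N' * m' / L) := Real.sqrt_mul (by norm_num) _
  _ = 2 * Real.sqrt 2 * Real.sqrt (N' * m' / L) := by rw [hsqrt8]
end

section
/- There exists a constant c > 0 such that for all integers N ≥ 2 and M with N < M ≤ 2^N, there exists an integer k with 1 ≤ k ≤ N satisfying k ≥ c · log₂ M / ( log₂(N / log₂ M) + 1 ) and binom(N, k−1) + binom(N, k) ≤ M. -/
open Real

lemma pow_div_four_le_factorial : ∀ k : ℕ, ((k : ℝ) / 4) ^ k ≤ k.factorial := by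
  intro k
  induction k with
  | zero => norm_num
  | succ k ih =>
    rcases Nat.eq_zero_or_pos k with hk | hk
    · subst hk; norm_num
    have hk0 : (0:ℝ) < k := by exact_mod_cast hk
    have hk1 : (1:ℝ) ≤ k := by exact_mod_cast hk
    have hratio : ((k:ℝ) + 1) / (k:ℝ) ≤ Real.exp (1 / k) := by
      have := Real.add_one_le_exp (1 / (k:ℝ))
      have h : ((k:ℝ)+1)/k = 1/k + 1 := by field_simp; ring
      rw [h]; linarith
    have hratio_pow : (((k:ℝ) + 1) / k) ^ k ≤ 4 := by
      calc (((k:ℝ) + 1) / k) ^ k ≤ (Real.exp (1 / k)) ^ k := by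
            apply pow_le_pow_left₀ (by positivity) hratio
        _ = Real.exp ((k:ℕ) * (1/(k:ℝ))) := by rw [Real.exp_nat_mul]
        _ = Real.exp 1 := by
            congr 1
            field_simp
        _ ≤ 4 := by
            have := Real.exp_one_lt_d9
            linarith
    have key : (((k:ℝ) + 1) / 4) ^ k ≤ 4 * ((k:ℝ)/4) ^ k := by
      have heq : (((k:ℝ) + 1) / 4) ^ k = (((k:ℝ)+1)/k)^k * ((k:ℝ)/4)^k := by
        rw [← mul_pow]
        congr 1
        field_simp
      rw [heq]
      apply mul_le_mul_of_nonneg_right hratio_pow (by positivity)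
    have hfact : ((k+1).factorial : ℝ) = ((k:ℝ)+1) * k.factorial := by
      rw [Nat.factorial_succ]; push_cast; ring
    calc ((↑(k+1):ℝ)/4) ^ (k+1) = (((k:ℝ)+1)/4) * (((k:ℝ)+1)/4)^k := by
          push_cast; rw [pow_succ]; ring
      _ ≤ (((k:ℝ)+1)/4) * (4 * ((k:ℝ)/4)^k) := by
          apply mul_le_mul_of_nonneg_left key (by positivity)
      _ = ((k:ℝ)+1) * ((k:ℝ)/4)^k := by ring
      _ ≤ ((k:ℝ)+1) * k.factorial := by
          apply mul_le_mul_of_nonneg_left ih (by positivity)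
      _ = ((k+1).factorial : ℝ) := hfact.symm

theorem lower_bound_k_exists :
    ∃ c : ℝ, c > 0 ∧
      ∀ (N M : ℕ), 2 ≤ N → N < M → (M : ℝ) ≤ 2 ^ N →
        ∃ k : ℕ, 1 ≤ k ∧ k ≤ N ∧
          (k : ℝ) ≥ c * Real.logb 2 M / (Real.logb 2 ((N : ℝ) / Real.logb 2 M) + 1) ∧
          N.choose (k - 1) + N.choose k ≤ M := by
  refine ⟨1/32, by norm_num, ?_⟩
  intro N M hN hNM hM2
  set L := Real.logb 2 M with hLdef
  set x := Real.logb 2 ((N:ℝ)/L) with hxdef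
  have hN0 : (0:ℝ) < N := by exact_mod_cast Nat.lt_of_lt_of_le (by norm_num) hN
  have hN1 : (1:ℝ) ≤ N := by exact_mod_cast Nat.one_le_of_lt hN
  have hM0 : (0:ℝ) < M := by exact_mod_cast Nat.lt_of_le_of_lt (Nat.zero_le N) hNM
  have h2M : (2:ℝ) < M := by exact_mod_cast Nat.lt_of_le_of_lt hN hNM
  have hL1 : 1 < L := by
    have := Real.logb_lt_logb (by norm_num : (1:ℝ) < 2) (by norm_num : (0:ℝ) < 2) h2M
    rwa [Real.logb_self_eq_one (by norm_num)] at this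
  have hL0 : 0 < L := by linarith
  have hLN : L ≤ (N:ℝ) := by
    have h1 : L ≤ Real.logb 2 ((2:ℝ)^N) :=
      (Real.logb_le_logb (by norm_num) hM0 (by positivity)).mpr hM2
    rwa [Real.logb_pow, Real.logb_self_eq_one (by norm_num), mul_one] at h1
  have hx0 : 0 ≤ x := Real.logb_nonneg (by norm_num) ((one_le_div hL0).mpr hLN)
  set D := x + 1 with hDdef
  have hD1 : (1:ℝ) ≤ D := by linarith
  have hD0 : (0:ℝ) < D := by linarith
  set t := 1/32 * L / D with htdef
  clear_value t D x L
  have ht0 : 0 < t := by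
    rw [htdef]
    exact div_pos (by nlinarith) hD0
  by_cases htle : t ≤ 1
  · refine ⟨1, le_refl 1, by omega, by push_cast; linarith, ?_⟩
    norm_num [Nat.choose_one_right]
    omega
  push_neg at htle
  have hkt : t ≤ (⌈t⌉₊:ℝ) := Nat.le_ceil t
  have hk2t : (⌈t⌉₊:ℝ) ≤ 2*t := by
    have := Nat.ceil_lt_add_one ht0.le
    linarith
  have htL : t ≤ 1/32 * L := by
    rw [htdef]
    exact div_le_self (by nlinarith) hD1
  have hkNr : (⌈t⌉₊:ℝ) ≤ (N:ℝ) := by linarith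
  have hkN : ⌈t⌉₊ ≤ N := by exact_mod_cast hkNr
  have hk1 : 1 ≤ ⌈t⌉₊ := Nat.one_le_ceil_iff.mpr ht0
  refine ⟨⌈t⌉₊, hk1, hkN, by exact_mod_cast hkt, ?_⟩
  set k := ⌈t⌉₊ with hkdef
  have hkpos : (0:ℝ) < k := by exact_mod_cast hk1
  -- rewrite sum of binomials as one binomial
  obtain ⟨j, hj⟩ : ∃ j, k = j + 1 := ⟨k - 1, by omega⟩
  have hsum : N.choose (k-1) + N.choose k = (N+1).choose k := by
    rw [hj]
    simp only [Nat.add_sub_cancel]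
    exact (Nat.choose_succ_succ N j).symm
  rw [hsum]
  -- real-valued bound
  set a : ℝ := 4 * ((N:ℝ)+1) / k with hadef
  have ha0 : (0:ℝ) < a := by positivity
  have ha1 : (1:ℝ) ≤ a := by
    rw [hadef, le_div_iff₀ hkpos, one_mul]
    linarith
  have hlogb0 : 0 ≤ Real.logb 2 a := Real.logb_nonneg (by norm_num) ha1
  -- logb bound
  have ha_le : a ≤ 256 * D * ((N:ℝ)/L) := by
    have h8 : a ≤ 8 * (N:ℝ) / k := by
      rw [hadef]
      rw [div_le_div_iff_of_pos_right hkpos]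
      linarith
    have h9 : 8 * (N:ℝ) / k ≤ 8 * (N:ℝ) / t :=
      div_le_div_of_nonneg_left (by positivity) ht0 hkt
    have h10 : 8 * (N:ℝ) / t = 256 * D * ((N:ℝ)/L) := by
      rw [htdef]
      field_simp
      ring
    linarith [h8, h9, h10]
  have hlogD : Real.logb 2 D ≤ 2 * x := by
    have h1 : Real.log D ≤ x := by
      have := Real.log_le_sub_one_of_pos hD0
      simpa [hDdef] using this
    have h2 : Real.log 2 > 1/2 := by
      have := Real.log_two_gt_d9; linarith
    have h3 : 0 ≤ Real.log D := Real.log_nonneg hD1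
    rw [Real.logb, div_le_iff₀ (by linarith : (0:ℝ) < Real.log 2)]
    nlinarith
  have hlog256 : Real.logb 2 (256:ℝ) = 8 := by
    have h : (256:ℝ) = 2^(8:ℕ) := by norm_num
    rw [h, Real.logb_pow, Real.logb_self_eq_one (by norm_num)]
    norm_num
  have hlogba : Real.logb 2 a ≤ 16 * D := by
    have hmono : Real.logb 2 a ≤ Real.logb 2 (256 * D * ((N:ℝ)/L)) :=
      (Real.logb_le_logb (by norm_num) ha0 (by positivity)).mpr ha_le
    have hsplit : Real.logb 2 (256 * D * ((N:ℝ)/L)) =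
        Real.logb 2 256 + Real.logb 2 D + x := by
      rw [Real.logb_mul (by positivity) (by positivity),
          Real.logb_mul (by norm_num) (by positivity), ← hxdef]
    rw [hsplit, hlog256] at hmono
    have : 8 + Real.logb 2 D + x ≤ 16 * D := by
      have hDx : D = x + 1 := hDdef
      linarith [hlogD, hx0]
    linarith
  have hexp : (k:ℝ) * Real.logb 2 a ≤ L := by
    have hD' : D ≠ 0 := ne_of_gt hD0
    have hk' : (k:ℝ) ≤ L / (16 * D) := by
      have h2t : 2 * t = L / (16 * D) := by
        rw [htdef]; field_simp; ring
      linarith [h2t, hk2t]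
    have := mul_le_mul hk' hlogba hlogb0 (by positivity)
    have heq : L / (16 * D) * (16 * D) = L := by field_simp
    linarith [heq, this]
  -- a^k ≤ M
  have hak : a ^ k ≤ (M:ℝ) := by
    have h1 : a ^ k = (2:ℝ) ^ ((k:ℝ) * Real.logb 2 a) := by
      rw [show ((k:ℝ) * Real.logb 2 a) = Real.logb 2 a * (k:ℝ) from mul_comm _ _,
          Real.rpow_mul (by norm_num : (0:ℝ) ≤ 2),
          Real.rpow_logb (by norm_num : (0:ℝ) < 2) (by norm_num) ha0,
          Real.rpow_natCast]
    have h2 : (M:ℝ) = (2:ℝ) ^ L := by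
      rw [hLdef, Real.rpow_logb (by norm_num : (0:ℝ) < 2) (by norm_num) hM0]
    rw [h1, h2]
    exact (Real.rpow_le_rpow_left_iff (by norm_num)).mpr hexp
  -- choose bound
  have hchoose : (((N+1).choose k : ℕ) : ℝ) * ((k:ℝ)/4)^k ≤ ((N:ℝ)+1)^k := by
    have hd : ((N+1).choose k : ℝ) * (k.factorial : ℝ) ≤ ((N:ℝ)+1)^k := by
      have := Nat.descFactorial_le_pow (N+1) k
      rw [Nat.descFactorial_eq_factorial_mul_choose] at this
      calc ((N+1).choose k : ℝ) * (k.factorial : ℝ)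
          = ((k.factorial * (N+1).choose k : ℕ) : ℝ) := by push_cast; ring
        _ ≤ (((N+1)^k : ℕ) : ℝ) := by exact_mod_cast this
        _ = ((N:ℝ)+1)^k := by push_cast; ring
    calc (((N+1).choose k : ℕ) : ℝ) * ((k:ℝ)/4)^k
        ≤ ((N+1).choose k : ℝ) * (k.factorial : ℝ) := by
          apply mul_le_mul_of_nonneg_left (pow_div_four_le_factorial k) (by positivity)
      _ ≤ ((N:ℝ)+1)^k := hd
  have hpowpos : (0:ℝ) < ((k:ℝ)/4)^k := by positivity
  have hfin : (((N+1).choose k : ℕ) : ℝ) ≤ (M:ℝ) := by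
    have h1 : (((N+1).choose k : ℕ) : ℝ) ≤ ((N:ℝ)+1)^k / ((k:ℝ)/4)^k :=
      (le_div_iff₀ hpowpos).mpr hchoose
    have h2 : ((N:ℝ)+1)^k / ((k:ℝ)/4)^k = a ^ k := by
      rw [← div_pow, hadef]
      congr 1
      field_simp
    rw [h2] at h1
    exact h1.trans hak
  exact_mod_cast hfin
end

section
/- Let D be a finite set of binary strings of length N, and let f_0, f_1, …, f_k : D → E be functions with Gram matrices F_0, F_1, …, F_k. Suppose that for each i ∈ {1,…,k} there is a feasible solution for γ(F_{i−1} − F_i) with cost function c_i. Then there is a feasible solution for γ(F_0 − F_k) whose cost function c satisfies c(x) ≤ ∑_{i=1}^k c_i(x) for all x ∈ D. -/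
open Finset

/-- A feasible solution for the filtered γ₂-norm SDP `γ(A)` on domain `D ⊆ {0,1}^N`,
with cost function `c`. -/
def GammaFeasible {N : ℕ} (D : Finset (Fin N → Bool))
    (A : (Fin N → Bool) → (Fin N → Bool) → ℝ)
    (c : (Fin N → Bool) → ℝ) : Prop :=
  ∃ (d : ℕ) (u v : (Fin N → Bool) → Fin N → EuclideanSpace ℂ (Fin d)),
    (∀ x ∈ D, ∀ y ∈ D,
      ∑ j ∈ Finset.univ.filter (fun j => x j ≠ y j),
        (inner ℂ (u x j) (v y j) : ℂ) = (A x y : ℂ)) ∧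
    (∀ x ∈ D, c x = max (∑ j, ‖u x j‖ ^ 2) (∑ j, ‖v x j‖ ^ 2))

/-- The Gram matrix of a function `f`. -/
def Gram {N : ℕ} {E : Type*} [DecidableEq E] (f : (Fin N → Bool) → E) :
    (Fin N → Bool) → (Fin N → Bool) → ℝ :=
  fun x y => if f x = f y then 1 else 0

/-!
Feasible solutions of `γ` are additive: concatenating the vectors of solutions for `A` and `B`
coordinatewise (a direct sum `ℂ^{d₁} ⊕ ℂ^{d₂}`) adds the inner products, so it solves `A + B`,
and the squared norms add too, so the cost is at most the sum of the costs. Since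
`F₀ - F_k` telescopes as `∑ᵢ (F_{i-1} - F_i)`, the theorem follows by induction on the number
of summands.
-/

theorem Fin.sum_castSucc_sub_succ {M : Type*} [AddCommGroup M] :
    ∀ {n : ℕ} (g : Fin (n + 1) → M), ∑ i : Fin n, (g i.castSucc - g i.succ) = g 0 - g (last n)
  | 0, _ => by simp
  | n + 1, g => by
    rw [Fin.sum_univ_castSucc]
    simp only [Fin.succ_castSucc]
    rw [Fin.sum_castSucc_sub_succ (fun i => g i.castSucc), Fin.castSucc_zero, Fin.succ_last]
    abel

section EuclideanAppend

variable {𝕜 : Type*} [RCLike 𝕜] {m n : ℕ}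

noncomputable def EuclideanSpace.append (a : EuclideanSpace 𝕜 (Fin m))
    (b : EuclideanSpace 𝕜 (Fin n)) : EuclideanSpace 𝕜 (Fin (m + n)) :=
  WithLp.toLp 2 (Fin.append a.ofLp b.ofLp)

theorem EuclideanSpace.inner_append (a a' : EuclideanSpace 𝕜 (Fin m))
    (b b' : EuclideanSpace 𝕜 (Fin n)) :
    inner 𝕜 (append a b) (append a' b') = inner 𝕜 a a' + inner 𝕜 b b' := by
  simp [append, PiLp.inner_apply, Fin.sum_univ_add]

theorem EuclideanSpace.norm_append_sq (a : EuclideanSpace 𝕜 (Fin m))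
    (b : EuclideanSpace 𝕜 (Fin n)) :
    ‖append a b‖ ^ 2 = ‖a‖ ^ 2 + ‖b‖ ^ 2 := by
  simp only [norm_sq_eq_re_inner (𝕜 := 𝕜), inner_append, map_add]

end EuclideanAppend

namespace GammaFeasible

variable {N : ℕ} {D : Finset (Fin N → Bool)}

theorem zero (D : Finset (Fin N → Bool)) : GammaFeasible D 0 0 :=
  ⟨0, 0, 0, fun _ _ _ _ => by simp, fun _ _ => by simp⟩

theorem exists_add {A B : (Fin N → Bool) → (Fin N → Bool) → ℝ} {cA cB : (Fin N → Bool) → ℝ}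
    (hA : GammaFeasible D A cA) (hB : GammaFeasible D B cB) :
    ∃ c, GammaFeasible D (A + B) c ∧ ∀ x ∈ D, c x ≤ cA x + cB x := by
  obtain ⟨d₁, u₁, v₁, hA, hcA⟩ := hA
  obtain ⟨d₂, u₂, v₂, hB, hcB⟩ := hB
  let u x j := EuclideanSpace.append (u₁ x j) (u₂ x j)
  let v x j := EuclideanSpace.append (v₁ x j) (v₂ x j)
  refine ⟨fun x => max (∑ j, ‖u x j‖ ^ 2) (∑ j, ‖v x j‖ ^ 2),
    ⟨d₁ + d₂, u, v, fun x hx y hy => ?_, fun _ _ => rfl⟩, fun x hx => ?_⟩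
  · simp only [u, v, EuclideanSpace.inner_append, sum_add_distrib, hA x hx y hy,
      hB x hx y hy, Pi.add_apply, Complex.ofReal_add]
  · simp only [u, v, hcA x hx, hcB x hx, EuclideanSpace.norm_append_sq, sum_add_distrib]
    exact max_le (add_le_add (le_max_left _ _) (le_max_left _ _))
      (add_le_add (le_max_right _ _) (le_max_right _ _))

theorem exists_sum {ι : Type*} (s : Finset ι) {A : ι → (Fin N → Bool) → (Fin N → Bool) → ℝ}
    {c : ι → (Fin N → Bool) → ℝ} (h : ∀ i ∈ s, GammaFeasible D (A i) (c i)) :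
    ∃ cc, GammaFeasible D (∑ i ∈ s, A i) cc ∧ ∀ x ∈ D, cc x ≤ ∑ i ∈ s, c i x := by
  induction s using Finset.cons_induction with
  | empty => exact ⟨0, by simpa using zero D, fun _ _ => by simp⟩
  | cons i s hi ih =>
    obtain ⟨cc, hcc, hle⟩ := ih fun j hj => h j (mem_cons_of_mem hj)
    obtain ⟨c', hc', hle'⟩ := (h i (mem_cons_self i s)).exists_add hcc
    refine ⟨c', by rwa [sum_cons], fun x hx => ?_⟩
    rw [sum_cons]
    exact (hle' x hx).trans (add_le_add_right (hle x hx) _)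

end GammaFeasible

theorem gamma_composition {N k : ℕ} {E : Type*} [DecidableEq E] (D : Finset (Fin N → Bool))
    (f : Fin (k + 1) → (Fin N → Bool) → E)
    (c : Fin k → (Fin N → Bool) → ℝ)
    (h : ∀ i : Fin k,
      GammaFeasible D (fun x y => Gram (f i.castSucc) x y - Gram (f i.succ) x y) (c i)) :
    ∃ cc : (Fin N → Bool) → ℝ,
      GammaFeasible D (fun x y => Gram (f 0) x y - Gram (f (Fin.last k)) x y) cc ∧
      ∀ x ∈ D, cc x ≤ ∑ i, c i x := by
  obtain ⟨cc, hcc, hle⟩ := GammaFeasible.exists_sum univ fun i _ => h i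
  refine ⟨cc, ?_, hle⟩
  convert hcc using 1
  ext x y
  simp only [Finset.sum_apply, Fin.sum_castSucc_sub_succ fun i => Gram (f i) x y]
end

section
/- Let D be a finite set of binary strings of length N and let f, g : D → E be functions with Gram matrices F and G. For e ∈ E let f^{-1}(e) = {x ∈ D : f(x) = e}, and let G_e denote the restriction of G to f^{-1}(e) × f^{-1}(e). Suppose that for every e ∈ E with f^{-1}(e) nonempty there is a feasible solution for γ(J − G_e) on domain f^{-1}(e) with cost function c_e. Then there is a feasible solution for γ(F − F∘G) on domain D whose cost function c satisfies c(x) ≤ c_{f(x)}(x) for all x ∈ D. -/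
open Finset

/-! Put the fiber solutions into mutually orthogonal blocks of the Hilbert sum `⨁ₑ ℂ^{dₑ}`.
Inner products of vectors from the same fiber are unchanged, those from different fibers vanish,
which gives the block-diagonal matrix `F - F ∘ G`; norms, hence costs, are unchanged. -/

theorem PiLp.inner_single_left {𝕜 ι : Type*} [RCLike 𝕜] [Fintype ι] [DecidableEq ι]
    {β : ι → Type*} [∀ i, NormedAddCommGroup (β i)] [∀ i, InnerProductSpace 𝕜 (β i)]
    (i : ι) (a : β i) (w : PiLp 2 β) :
    inner 𝕜 (PiLp.single 2 i a) w = inner 𝕜 a (w i) := by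
  rw [PiLp.inner_apply, sum_eq_single i]
  · rw [PiLp.single_eq_same]
  · intro j _ hji
    rw [PiLp.single_eq_of_ne 2 hji, inner_zero_left]
  · exact absurd (mem_univ i)

namespace Finset

variable {𝕜 ι : Type*} [RCLike 𝕜] [DecidableEq ι] (s : Finset ι) {β : ι → Type*}
  [∀ i, NormedAddCommGroup (β i)] [∀ i, InnerProductSpace 𝕜 (β i)]

noncomputable def piLpSingle (i : ι) (a : β i) : PiLp 2 fun i : s => β i :=
  if hi : i ∈ s then PiLp.single 2 ⟨i, hi⟩ a else 0

variable {s}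

theorem inner_piLpSingle_same {i : ι} (hi : i ∈ s) (a b : β i) :
    inner 𝕜 (s.piLpSingle i a) (s.piLpSingle i b) = inner 𝕜 a b := by
  simp only [piLpSingle, dif_pos hi, PiLp.inner_single_left, PiLp.single_eq_same]

theorem inner_piLpSingle_of_ne {i j : ι} (hij : i ≠ j) (a : β i) (b : β j) :
    inner 𝕜 (s.piLpSingle i a) (s.piLpSingle j b) = 0 := by
  by_cases hi : i ∈ s
  · by_cases hj : j ∈ s
    · simp only [piLpSingle, dif_pos hi, dif_pos hj, PiLp.inner_single_left,
        PiLp.single_eq_of_ne 2 fun h : (⟨i, hi⟩ : s) = ⟨j, hj⟩ => hij (congrArg Subtype.val h),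
        inner_zero_right]
    · simp only [piLpSingle, dif_neg hj, inner_zero_right]
  · simp only [piLpSingle, dif_neg hi, inner_zero_left]

theorem norm_piLpSingle {i : ι} (hi : i ∈ s) (a : β i) : ‖s.piLpSingle i a‖ = ‖a‖ := by
  simp only [piLpSingle, dif_pos hi, PiLp.norm_single]

end Finset

section GammaFeasible

variable {N : ℕ} {D : Finset (Fin N → Bool)} {A : (Fin N → Bool) → (Fin N → Bool) → ℝ}

theorem gammaFeasible_empty (c : (Fin N → Bool) → ℝ) : GammaFeasible ∅ A c :=
  ⟨0, 0, 0, by simp, by simp⟩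

theorem gammaFeasible_of_innerProductSpace {W : Type*} [NormedAddCommGroup W]
    [InnerProductSpace ℂ W] [FiniteDimensional ℂ W] {c : (Fin N → Bool) → ℝ}
    (u v : (Fin N → Bool) → Fin N → W)
    (hA : ∀ x ∈ D, ∀ y ∈ D,
      ∑ j ∈ univ.filter (fun j => x j ≠ y j), inner ℂ (u x j) (v y j) = (A x y : ℂ))
    (hc : ∀ x ∈ D, c x = max (∑ j, ‖u x j‖ ^ 2) (∑ j, ‖v x j‖ ^ 2)) :
    GammaFeasible D A c := by
  let b := stdOrthonormalBasis ℂ W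
  refine ⟨_, fun x j => b.repr (u x j), fun x j => b.repr (v x j), ?_, ?_⟩
  · simpa only [LinearIsometryEquiv.inner_map_map] using hA
  · simpa only [LinearIsometryEquiv.norm_map] using hc

theorem GammaFeasible.blockDiagonal {E : Type*} [DecidableEq E] (f : (Fin N → Bool) → E)
    {c : E → (Fin N → Bool) → ℝ}
    (h : ∀ e ∈ D.image f, GammaFeasible (D.filter (f · = e)) A (c e)) :
    GammaFeasible D (fun x y => if f x = f y then A x y else 0) (fun x => c (f x) x) := by
  have h' : ∀ e, GammaFeasible (D.filter (f · = e)) A (c e) := fun e => by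
    by_cases he : e ∈ D.image f
    · exact h e he
    · rw [filter_eq_empty_iff.2 fun x hx hfx => he (mem_image.2 ⟨x, hx, hfx⟩)]
      exact gammaFeasible_empty _
  choose d u v hA hc using h'
  let blocks (e : E) := EuclideanSpace ℂ (Fin (d e))
  refine gammaFeasible_of_innerProductSpace
    (fun x j => (D.image f).piLpSingle (β := blocks) (f x) (u (f x) x j))
    (fun x j => (D.image f).piLpSingle (β := blocks) (f x) (v (f x) x j)) ?_ ?_
  · intro x hx y hy
    by_cases hxy : f x = f y
    · rw [if_pos hxy, ← hA (f x) x (mem_filter.2 ⟨hx, rfl⟩) y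
        (mem_filter.2 ⟨hy, hxy.symm⟩)]
      -- the summands depend on `f y` through their types, so transport along `hxy` by `subst`
      generalize f y = e at hxy ⊢
      subst hxy
      exact sum_congr rfl fun j _ => inner_piLpSingle_same (mem_image_of_mem f hx) _ _
    · rw [if_neg hxy, Complex.ofReal_zero]
      exact sum_eq_zero fun j _ => inner_piLpSingle_of_ne hxy _ _
  · intro x hx
    simp only [norm_piLpSingle (mem_image_of_mem f hx)]
    exact hc (f x) x (mem_filter.2 ⟨hx, rfl⟩)

end GammaFeasible

theorem gamma_output_composition {N : ℕ} {E : Type*} [DecidableEq E]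
    (D : Finset (Fin N → Bool))
    (f g : (Fin N → Bool) → E)
    (c : E → (Fin N → Bool) → ℝ)
    (h : ∀ e : E, (∃ x ∈ D, f x = e) →
      GammaFeasible (D.filter (fun x => f x = e))
        (fun x y => 1 - Gram g x y) (c e)) :
    ∃ cc : (Fin N → Bool) → ℝ,
      GammaFeasible D (fun x y => Gram f x y - Gram f x y * Gram g x y) cc ∧
      ∀ x ∈ D, cc x ≤ c (f x) x := by
  have hblock := GammaFeasible.blockDiagonal f fun e he => h e (mem_image.1 he)
  refine ⟨fun x => c (f x) x, ?_, fun x _ => le_rfl⟩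
  convert hblock using 3 with x y
  by_cases hxy : f x = f y <;> simp [Gram, hxy]
end

section
/- Let D = {0,1}^N, let f : D → {1,…,N+1} be the function with f(x) equal to the smallest index i such that x_i = 1, and f(x) = N+1 if x is the all-zeros string, and let F be the Gram matrix of f. Then there is a feasible solution for γ(J − F) whose cost function c satisfies c(x) ≤ 3·√(f(x)) for all x ∈ D. -/
open Finset

/-- The find-first-one function: `firstOne x` is the smallest index `i ∈ {1,…,N}`
(1-indexed) such that `x_i = 1`, and `N + 1` if `x` is the all-zeros string. -/
def firstOne {N : ℕ} (x : Fin N → Bool) : ℕ :=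
  if h : (Finset.univ.filter (fun i => x i = true)).Nonempty then
    ((Finset.univ.filter (fun i => x i = true)).min' h : ℕ) + 1
  else N + 1


/-!
Take `u_{x,j} = v_{x,j} = w_j(x) · e_{x₀…x_{j-1}}`, a weight times the basis vector indexed by
the prefix of `x` of length `j`. For `x ≠ y` only the first index `m` where they differ
contributes, since beyond it the prefixes differ. If `f(x) = f(y)`, then `m` lies past their common
first one, where all weights are `0`; otherwise `m + 1 = min (f x) (f y)`, and the weights
`σ_k⁻¹` before the first one and `σ_k` at it multiply to `1`. With `σ_k² = 2√k` the cost is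
`∑_{k < f} 1/(2√k) + 2√f ≤ √f + 2√f`.
-/

namespace FindFirstOne

section PrefixVectors

variable {N : ℕ}

def truncate (j : Fin N) (x : Fin N → Bool) : Fin N → Bool :=
  fun i => if i < j then x i else false

lemma exists_first_diff {x y : Fin N → Bool} (hxy : x ≠ y) :
    ∃ m, x m ≠ y m ∧ ∀ i < m, x i = y i := by
  have hne : (univ.filter fun j => x j ≠ y j).Nonempty := by
    obtain ⟨j, hj⟩ := Function.ne_iff.mp hxy
    exact ⟨j, by simpa using hj⟩
  obtain ⟨m, hm, hmin⟩ := (univ.filter fun j => x j ≠ y j).exists_min_image id hne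
  refine ⟨m, (mem_filter.mp hm).2, fun i hi => ?_⟩
  by_contra hxi
  exact absurd (hmin i (by simpa using hxi)) (not_le.mpr hi)

lemma truncate_eq_truncate_iff {x y : Fin N → Bool} {m : Fin N} (hm : x m ≠ y m)
    (hlt : ∀ i < m, x i = y i) {j : Fin N} (hj : m ≤ j) :
    truncate j x = truncate j y ↔ j = m := by
  constructor
  · intro h
    by_contra hjm
    have := congrFun h m
    simp only [truncate, if_pos (lt_of_le_of_ne hj (Ne.symm hjm))] at this
    exact hm this
  · rintro rfl
    funext i
    simp only [truncate]
    split_ifs with hi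
    exacts [hlt i hi, rfl]

noncomputable def prefixVec (w : (Fin N → Bool) → Fin N → ℝ) (x : Fin N → Bool) (j : Fin N) :
    EuclideanSpace ℂ (Fin (Fintype.card (Fin N → Bool))) :=
  (w x j : ℂ) • EuclideanSpace.single (Fintype.equivFin _ (truncate j x)) 1

variable (w : (Fin N → Bool) → Fin N → ℝ)

lemma inner_prefixVec (x y : Fin N → Bool) (j : Fin N) :
    inner ℂ (prefixVec w x j) (prefixVec w y j) =
      if truncate j x = truncate j y then ((w x j * w y j : ℝ) : ℂ) else 0 := by
  simp only [prefixVec, inner_smul_left, inner_smul_right, EuclideanSpace.inner_single_left,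
    PiLp.single_apply, Equiv.apply_eq_iff_eq, Complex.conj_ofReal, map_one, one_mul]
  split_ifs <;> push_cast <;> ring

lemma norm_prefixVec_sq (x : Fin N → Bool) (j : Fin N) :
    ‖prefixVec w x j‖ ^ 2 = w x j ^ 2 := by
  simp [prefixVec, norm_smul, sq_abs]

lemma sum_inner_prefixVec {x y : Fin N → Bool} {m : Fin N} (hm : x m ≠ y m)
    (hlt : ∀ i < m, x i = y i) :
    ∑ j ∈ univ.filter (fun j => x j ≠ y j), inner ℂ (prefixVec w x j) (prefixVec w y j) =
      ((w x m * w y m : ℝ) : ℂ) := by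
  have hmin : ∀ j, x j ≠ y j → m ≤ j := fun j hj =>
    not_lt.mp fun hjm => hj (hlt j hjm)
  rw [sum_eq_single_of_mem m (by simpa using hm)]
  · rw [inner_prefixVec, if_pos ((truncate_eq_truncate_iff hm hlt le_rfl).mpr rfl)]
  · intro j hj hjm
    rw [inner_prefixVec, if_neg]
    rw [truncate_eq_truncate_iff hm hlt (hmin j (mem_filter.mp hj).2)]
    exact hjm

lemma gammaFeasible_prefixVec (A : (Fin N → Bool) → (Fin N → Bool) → ℝ)
    (hdiag : ∀ x, A x x = 0)
    (hw : ∀ x y m, x m ≠ y m → (∀ i < m, x i = y i) → w x m * w y m = A x y) :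
    GammaFeasible univ A (fun x => ∑ j, w x j ^ 2) := by
  refine ⟨_, prefixVec w, prefixVec w, fun x _ y _ => ?_, fun x _ => ?_⟩
  · by_cases hxy : x = y
    · subst hxy
      simp [hdiag]
    · obtain ⟨m, hm, hlt⟩ := exists_first_diff hxy
      rw [sum_inner_prefixVec w hm hlt, hw x y m hm hlt]
  · simp only [norm_prefixVec_sq, max_self]

end PrefixVectors

section FirstOne

variable {N : ℕ}

lemma firstOne_le_iff (x : Fin N → Bool) {k : ℕ} (hk : k ≤ N) :
    firstOne x ≤ k ↔ ∃ i : Fin N, (i : ℕ) < k ∧ x i = true := by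
  have hmem : ∀ i, i ∈ univ.filter (fun i => x i = true) ↔ x i = true := by simp
  unfold firstOne
  split_ifs with h
  · constructor
    · intro hle
      exact ⟨_, by omega, (hmem _).mp (min'_mem _ h)⟩
    · rintro ⟨i, hi, hxi⟩
      have := Fin.le_def.mp (min'_le _ i ((hmem i).mpr hxi))
      omega
  · constructor
    · omega
    · rintro ⟨i, _, hxi⟩
      exact absurd ⟨i, (hmem i).mpr hxi⟩ h

lemma firstOne_of_first_diff {x y : Fin N → Bool} {m : Fin N} (hx : x m = true)
    (hy : y m = false) (hlt : ∀ i < m, x i = y i) :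
    (firstOne y = firstOne x ∧ firstOne x < m + 1) ∨
      (firstOne x = m + 1 ∧ m + 1 < firstOne y) := by
  have hmN : (m : ℕ) + 1 ≤ N := m.isLt
  have hx_le : firstOne x ≤ m + 1 := (firstOne_le_iff x hmN).mpr ⟨m, by omega, hx⟩
  have hagree : ∀ k ≤ (m : ℕ), firstOne x ≤ k ↔ firstOne y ≤ k := by
    intro k hk
    rw [firstOne_le_iff x (by omega), firstOne_le_iff y (by omega)]
    refine exists_congr fun i => and_congr_right fun hi => ?_
    rw [hlt i (Fin.lt_def.mpr (by omega))]
  by_cases h : firstOne x ≤ m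
  · have hy_le := (hagree _ le_rfl).mp h
    refine Or.inl ⟨le_antisymm ((hagree _ h).mp le_rfl) ((hagree _ hy_le).mpr le_rfl), by omega⟩
  · refine Or.inr ⟨by omega, not_le.mp fun hy_le => ?_⟩
    obtain ⟨i, hi, hyi⟩ := (firstOne_le_iff y hmN).mp hy_le
    rcases Nat.lt_succ_iff_lt_or_eq.mp hi with hi | hi
    · rw [← hlt i (Fin.lt_def.mpr hi)] at hyi
      exact h ((firstOne_le_iff x m.isLt.le).mpr ⟨i, hi, hyi⟩)
    · rw [Fin.ext hi, hy] at hyi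
      exact Bool.false_ne_true hyi

end FirstOne

/-- `k` is a 1-indexed position and `f` the (1-indexed) position of the first one. -/
noncomputable def weight (k f : ℕ) : ℝ :=
  if k < f then (√(2 * √k))⁻¹ else if k = f then √(2 * √k) else 0

lemma weight_sq (k f : ℕ) :
    weight k f ^ 2 = if k < f then (2 * √k)⁻¹ else if k = f then 2 * √k else 0 := by
  unfold weight
  split_ifs
  · rw [inv_pow, Real.sq_sqrt (by positivity)]
  · rw [Real.sq_sqrt (by positivity)]
  · rw [sq, mul_zero]

lemma weight_mul_weight {k f g : ℕ} (hk : 0 < k)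
    (h : (g = f ∧ f < k) ∨ (f = k ∧ k < g)) :
    weight k f * weight k g = 1 - if f = g then 1 else 0 := by
  have hσ : √(2 * √(k : ℝ)) ≠ 0 := by positivity
  rcases h with ⟨rfl, hf⟩ | ⟨rfl, hg⟩
  · simp [weight, not_lt.mpr hf.le, hf.ne']
  · rw [weight, weight, if_neg (lt_irrefl f), if_pos rfl, if_pos hg, if_neg hg.ne]
    rw [mul_inv_cancel₀ hσ, sub_zero]

lemma sum_range_inv_two_sqrt_le (n : ℕ) :
    ∑ k ∈ range n, (2 * √((k : ℝ) + 1))⁻¹ ≤ √n := by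
  induction n with
  | zero => simp
  | succ n ih =>
    rw [sum_range_succ, Nat.cast_succ]
    have hs : 0 < √((n : ℝ) + 1) := by positivity
    have hr : 0 ≤ √(n : ℝ) := Real.sqrt_nonneg _
    have hs2 : √((n : ℝ) + 1) ^ 2 = n + 1 := Real.sq_sqrt (by positivity)
    have hr2 : √(n : ℝ) ^ 2 = n := Real.sq_sqrt (by positivity)
    -- `(√(n+1) - √n)(√(n+1) + √n) = 1` and `√(n+1) + √n ≤ 2√(n+1)`
    have step : (2 * √((n : ℝ) + 1))⁻¹ ≤ √((n : ℝ) + 1) - √n := by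
      rw [inv_le_iff_one_le_mul₀ (by positivity)]
      nlinarith [sq_nonneg (√((n : ℝ) + 1) - √n)]
    linarith

lemma sum_range_weight_sq_le (n f : ℕ) :
    ∑ k ∈ range n, weight (k + 1) f ^ 2 ≤ 3 * √f := by
  have hvanish : ∀ k, f ≤ k → weight (k + 1) f ^ 2 = 0 := fun k hk => by
    rw [weight_sq, if_neg (by omega), if_neg (by omega)]
  calc ∑ k ∈ range n, weight (k + 1) f ^ 2
      ≤ ∑ k ∈ range (max n f), weight (k + 1) f ^ 2 :=
        sum_le_sum_of_subset_of_nonneg (range_subset_range.mpr (le_max_left _ _))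
          fun _ _ _ => sq_nonneg _
    _ = ∑ k ∈ range f, weight (k + 1) f ^ 2 :=
        (sum_subset (range_subset_range.mpr (le_max_right _ _))
          fun k _ hk => hvanish k (by simpa using hk)).symm
    _ ≤ 3 * √f := by
      rcases f with _ | g
      · simp
      have hbefore : ∀ k ∈ range g, weight (k + 1) (g + 1) ^ 2 = (2 * √((k : ℝ) + 1))⁻¹ :=
        fun k hk => by
          rw [weight_sq, if_pos (by simpa using hk)]
          push_cast
          rfl
      have hsqrt : √(g : ℝ) ≤ √((g : ℝ) + 1) := Real.sqrt_le_sqrt (by linarith)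
      rw [sum_range_succ, sum_congr rfl hbefore, weight_sq, if_neg (lt_irrefl _), if_pos rfl]
      push_cast
      linarith [sum_range_inv_two_sqrt_le g]

lemma weight_firstOne_mul {N : ℕ} {x y : Fin N → Bool} {m : Fin N} (hm : x m ≠ y m)
    (hlt : ∀ i < m, x i = y i) :
    weight (m + 1) (firstOne x) * weight (m + 1) (firstOne y) = 1 - Gram firstOne x y := by
  unfold Gram
  cases hx : x m
  · have hy : y m = true := by simpa [hx] using hm.symm
    rw [mul_comm, weight_mul_weight (Nat.succ_pos m)
      (firstOne_of_first_diff hy hx fun i hi => (hlt i hi).symm)]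
    simp only [eq_comm]
  · have hy : y m = false := by simpa [hx] using hm.symm
    exact weight_mul_weight (Nat.succ_pos m) (firstOne_of_first_diff hx hy hlt)

end FindFirstOne

theorem find_first_one_sdp (N : ℕ) :
    ∃ c : (Fin N → Bool) → ℝ,
      GammaFeasible (Finset.univ : Finset (Fin N → Bool))
        (fun x y => 1 - Gram firstOne x y) c ∧
      ∀ x : Fin N → Bool, c x ≤ 3 * Real.sqrt (firstOne x) := by
  refine ⟨_, FindFirstOne.gammaFeasible_prefixVec
    (fun x j => FindFirstOne.weight (j + 1) (firstOne x)) _ (fun x => by simp [Gram])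
    fun x y m => FindFirstOne.weight_firstOne_mul, fun x => ?_⟩
  rw [Fin.sum_univ_eq_sum_range (fun k => FindFirstOne.weight (k + 1) (firstOne x) ^ 2)]
  exact FindFirstOne.sum_range_weight_sq_le N (firstOne x)
end
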